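/- Let G be a (ρ,d)-dense graph on n vertices and v a vertex with |N(v)| ≥ μn/2. Then the induced subgraph G[N(v)] is (4ρ/μ², d)-dense, and consequently G[N(v)] contains at least (d^{C(2k+1,2)} − 2k(2k+1)·4ρ/μ²)·|N(v)|^{2k+1} ordered copies of K_{2k+1}. -/

import Mathlib

open Finset
open scoped Classical

variable {V : Type*} [Fintype V] [DecidableEq V]

/-- Number of ordered pairs `(x,y) ∈ X × Y` with `x` adjacent to `y`.
For disjoint `X`, `Y` this is the number `e(X,Y)` of edges between `X` and `Y`. -/
noncomputable def crossCount (G : SimpleGraph V) (X Y : Finset V) : ℕ :=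
  ((X ×ˢ Y).filter fun p => G.Adj p.1 p.2).card

/-- Number of ordered adjacent pairs inside `U`; `edgePairs G U / 2 = e(U)`. -/
noncomputable def edgePairs (G : SimpleGraph V) (U : Finset V) : ℕ :=
  ((U ×ˢ U).filter fun p => G.Adj p.1 p.2).card

/-- `G` is `(ρ,d)`-dense: `e(U) ≥ d|U|²/2 - ρ n²` for every `U`. -/
def RhoDense (G : SimpleGraph V) (ρ d : ℝ) : Prop :=
  ∀ U : Finset V,
    (edgePairs G U : ℝ) / 2 ≥ d * (U.card : ℝ) ^ 2 / 2 - ρ * (Fintype.card V : ℝ) ^ 2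

/-- `G` is `μ`-inseparable: `e(X, V∖X) ≥ μ|X||V∖X|` for every `X`. -/
def MuInsep (G : SimpleGraph V) (μ : ℝ) : Prop :=
  ∀ X : Finset V, (crossCount G X Xᶜ : ℝ) ≥ μ * (X.card : ℝ) * (Xᶜ.card : ℝ)

/-- Number of common neighbours of the vertices of the tuple `x`. -/
noncomputable def extCount (G : SimpleGraph V) {k : ℕ} (x : Fin k → V) : ℕ :=
  (Finset.univ.filter fun w => ∀ i, G.Adj (x i) w).card

/-- A `k`-tuple is `ζ`-connectable if it extends to at least `ζn` cliques `K_{k+1}`. -/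
def Connectable (G : SimpleGraph V) (ζ : ℝ) {k : ℕ} (x : Fin k → V) : Prop :=
  (extCount G x : ℝ) ≥ ζ * (Fintype.card V : ℝ)

/-- `v` is a `k`-path (the `k`-th power of a path) in `G`. -/
def IsPowPath (G : SimpleGraph V) (k : ℕ) {ℓ : ℕ} (v : Fin ℓ → V) : Prop :=
  Function.Injective v ∧
    ∀ i j : Fin ℓ, (i : ℕ) < (j : ℕ) → (j : ℕ) ≤ (i : ℕ) + k → G.Adj (v i) (v j)

/-- Number of `(x,y)`-walks with exactly `ℓ` inner vertices. -/
noncomputable def walkCount (G : SimpleGraph V) (x y : V) (ℓ : ℕ) : ℕ :=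
  (Finset.univ.filter fun v : Fin ℓ → V =>
    ∀ i : Fin (ℓ + 1),
      G.Adj ((Fin.cons x (Fin.snoc v y) : Fin (ℓ + 2) → V) i.castSucc)
        ((Fin.cons x (Fin.snoc v y) : Fin (ℓ + 2) → V) i.succ)).card

/-- Number of `(x⃗,y⃗;k)`-paths with exactly `m` inner vertices. -/
noncomputable def pathCount (G : SimpleGraph V) (k : ℕ) (x y : Fin k → V) (m : ℕ) : ℕ :=
  (Finset.univ.filter fun w : Fin m → V =>
    IsPowPath G k (Fin.append (Fin.append x w) y)).card

/-- `G` contains the `k`-th power of a Hamiltonian cycle. -/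
def HasHamCyclePower {n : ℕ} (G : SimpleGraph (Fin n)) (k : ℕ) : Prop :=
  ∃ σ : Equiv.Perm (Fin n), ∀ (i : Fin n) (s : ℕ), 0 < s → s ≤ k →
    G.Adj (σ i) (σ ⟨((i : ℕ) + s) % n, Nat.mod_lt _ i.pos⟩)

noncomputable def cliqueTuples (G : SimpleGraph V) (U : Finset V) (r : ℕ) :
    Finset (Fin r → V) :=
  Finset.univ.filter fun x => (∀ i, x i ∈ U) ∧ ∀ i j, i ≠ j → G.Adj (x i) (x j)

lemma card_cliqueTuples_one (G : SimpleGraph V) (U : Finset V) :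
    (cliqueTuples G U 1).card = U.card := by
  apply Finset.card_bij (fun x _ => x 0)
  · intro x hx
    simp only [cliqueTuples, mem_filter] at hx
    exact hx.2.1 0
  · intro x hx y hy h
    funext i
    have : i = 0 := Subsingleton.elim _ _
    subst this; exact h
  · intro u hu
    refine ⟨fun _ => u, ?_, rfl⟩
    simp only [cliqueTuples, mem_filter, mem_univ, true_and]
    exact ⟨fun _ => hu, fun i j hij => absurd (Subsingleton.elim i j) hij⟩

lemma cliqueTuples_succ (G : SimpleGraph V) (U : Finset V) (r : ℕ) :
    (cliqueTuples G U (r + 1)).card =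
      ∑ u ∈ U, (cliqueTuples G (U.filter fun w => G.Adj u w) r).card := by
  rw [Finset.card_eq_sum_card_fiberwise (f := fun x => x (Fin.last r)) (t := U)
    (fun x hx => (Finset.mem_filter.1 (Finset.mem_coe.1 hx)).2.1 _)]
  refine Finset.sum_congr rfl fun u hu => ?_
  apply Finset.card_bij (fun x _ => Fin.init x)
  · intro x hx
    simp only [mem_filter, cliqueTuples, mem_univ, true_and] at hx ⊢
    obtain ⟨⟨hmem, hadj⟩, hlast⟩ := hx
    refine ⟨fun i => ?_, fun i j hij => ?_⟩
    · simp only [Fin.init]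
      refine ⟨hmem _, ?_⟩
      have := hadj (Fin.last r) i.castSucc (Fin.castSucc_lt_last i).ne'
      rwa [hlast] at this
    · exact hadj _ _ (fun h => hij (Fin.castSucc_injective r h))
  · intro x hx y hy h
    simp only [mem_filter, cliqueTuples] at hx hy
    funext i
    rcases Fin.eq_castSucc_or_eq_last i with ⟨j, rfl⟩ | rfl
    · exact congrFun h j
    · rw [hx.2, hy.2]
  · intro y hy
    simp only [cliqueTuples, mem_filter, mem_univ, true_and] at hy
    obtain ⟨hmem, hadj⟩ := hy
    refine ⟨Fin.snoc y u, ?_, ?_⟩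
    · simp only [mem_filter, cliqueTuples, mem_univ, true_and, Fin.snoc_last,
        and_true]
      refine ⟨fun i => ?_, fun i j hij => ?_⟩
      · rcases Fin.eq_castSucc_or_eq_last i with ⟨m, rfl⟩ | rfl
        · rw [Fin.snoc_castSucc]; exact (hmem m).1
        · rw [Fin.snoc_last]; exact hu
      · rcases Fin.eq_castSucc_or_eq_last i with ⟨a, rfl⟩ | rfl <;>
          rcases Fin.eq_castSucc_or_eq_last j with ⟨b, rfl⟩ | rfl
        · rw [Fin.snoc_castSucc, Fin.snoc_castSucc]
          exact hadj a b (fun h => hij (by rw [h]))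
        · rw [Fin.snoc_castSucc, Fin.snoc_last]
          exact ((hmem a).2).symm
        · rw [Fin.snoc_last, Fin.snoc_castSucc]
          exact (hmem b).2
        · exact absurd rfl hij
    · funext i
      simp [Fin.init]

lemma edgePairs_eq_sum (G : SimpleGraph V) (U : Finset V) :
    edgePairs G U = ∑ u ∈ U, (U.filter fun w => G.Adj u w).card := by
  unfold edgePairs
  rw [Finset.card_eq_sum_card_fiberwise (f := Prod.fst) (t := U)
    (fun p hp => (Finset.mem_product.1 (Finset.mem_filter.1 hp).1).1)]
  refine Finset.sum_congr rfl fun u hu => ?_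
  apply Finset.card_bij (fun p _ => p.2)
  · intro p hp
    simp only [mem_filter, Finset.mem_product] at hp ⊢
    exact ⟨hp.1.1.2, hp.2 ▸ hp.1.2⟩
  · intro p hp q hq h
    simp only [mem_filter] at hp hq
    exact Prod.ext (hp.2.trans hq.2.symm) h
  · intro w hw
    simp only [mem_filter, Finset.mem_product] at hw ⊢
    exact ⟨(u, w), ⟨⟨⟨hu, hw.1⟩, hw.2⟩, rfl⟩, rfl⟩

lemma pow_sub_ge (a b : ℝ) (hb : 0 ≤ b) (hba : b ≤ a) (n : ℕ) :
    a ^ (n + 1) - (n + 1 : ℝ) * a ^ n * b ≤ (a - b) ^ (n + 1) := by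
  rcases eq_or_lt_of_le (hb.trans hba) with h | ha
  · have ha0 : a = 0 := h.symm
    have hb0 : b = 0 := le_antisymm (ha0 ▸ hba) hb
    simp [ha0, hb0]
  · have h1 : a - b = (1 + -(b / a)) * a := by field_simp; ring
    have h2 : (-2 : ℝ) ≤ -(b / a) := by
      have : b / a ≤ 1 := (div_le_one ha).2 hba
      linarith
    have hB := one_add_mul_le_pow h2 (n + 1)
    have h3 : (1 + (n + 1 : ℕ) * -(b / a)) * a ^ (n + 1) ≤
        (1 + -(b / a)) ^ (n + 1) * a ^ (n + 1) :=
      mul_le_mul_of_nonneg_right hB (by positivity)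
    rw [h1, mul_pow]
    refine le_trans (le_of_eq ?_) h3
    have hpow : a ^ (n + 1) = a ^ n * a := pow_succ a n
    push_cast
    field_simp
    ring

set_option maxHeartbeats 1000000 in
lemma clique_count (G : SimpleGraph V) (d B : ℝ) (hd0 : 0 ≤ d) (hd1 : d ≤ 1) (hB : 0 ≤ B)
    (S : Finset V) (hS : 0 < S.card)
    (hdense : ∀ U ⊆ S, (edgePairs G U : ℝ) ≥ d * (U.card : ℝ) ^ 2 - 2 * B) :
    ∀ r : ℕ, ∀ U ⊆ S, ((cliqueTuples G U (r + 1)).card : ℝ) ≥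
      d ^ ((r + 1).choose 2) * (U.card : ℝ) ^ (r + 1) -
        ((r : ℝ) + 1) * (r : ℝ) * B * (S.card : ℝ) ^ r / (S.card : ℝ) := by
  have hM0 : (0:ℝ) < (S.card : ℝ) := by exact_mod_cast hS
  intro r
  induction r with
  | zero =>
    intro U hU
    rw [card_cliqueTuples_one]
    norm_num
  | succ r ih =>
    intro U hU
    set M : ℝ := (S.card : ℝ) with hMdef
    set u : ℝ := (U.card : ℝ) with hu
    have hUM : u ≤ M := by rw [hu, hMdef]; exact_mod_cast Finset.card_le_card hU
    have hu0 : (0:ℝ) ≤ u := Nat.cast_nonneg _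
    have hMdiv : M ^ (r + 1) / M = M ^ r := by
      rw [pow_succ, mul_div_assoc, div_self hM0.ne', mul_one]
    have hC : (r + 1 + 1).choose 2 = (r + 1).choose 2 + (r + 1) := by
      rw [Nat.choose_succ_succ, Nat.choose_one_right, Nat.add_comm]
    set c := (r + 1).choose 2 with hc
    set C := (r + 1 + 1).choose 2 with hCdef
    set a : V → ℝ := fun x => ((U.filter fun w => G.Adj x w).card : ℝ) with ha
    have hrec : ((cliqueTuples G U (r + 1 + 1)).card : ℝ) =
        ∑ x ∈ U, ((cliqueTuples G (U.filter fun w => G.Adj x w) (r + 1)).card : ℝ) := by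
      rw [cliqueTuples_succ]; push_cast; rfl
    set T : ℝ := ((r : ℝ) + 1) * (r : ℝ) * B * M ^ r / M with hT
    have hstep : ((cliqueTuples G U (r + 1 + 1)).card : ℝ) ≥
        d ^ c * ∑ x ∈ U, a x ^ (r + 1) - u * T := by
      rw [hrec, Finset.mul_sum]
      have hss := Finset.sum_le_sum
        (f := fun x => d ^ c * a x ^ (r + 1) - T)
        (g := fun x => ((cliqueTuples G (U.filter fun w => G.Adj x w) (r + 1)).card : ℝ))
        (s := U) (fun x _ => by
          have := ih (U.filter fun w => G.Adj x w) ((Finset.filter_subset _ _).trans hU)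
          exact le_of_le_of_eq this rfl)
      rw [Finset.sum_sub_distrib, Finset.sum_const, nsmul_eq_mul, ← hu] at hss
      rw [ge_iff_le]
      linarith [hss]
    have hsum_a : ∑ x ∈ U, a x = (edgePairs G U : ℝ) := by
      rw [edgePairs_eq_sum]; push_cast; rfl
    by_cases hcase : 2 * B ≤ d * u ^ 2
    · by_cases hU0 : U.card = 0
      · have hu0' : u = 0 := by rw [hu, hU0]; norm_num
        have hB0 : B = 0 := by nlinarith
        rw [hB0, hu0']
        simp [zero_pow]
      · have hupos : (0:ℝ) < u := by
          rw [hu]; exact_mod_cast Nat.pos_of_ne_zero hU0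
        have hupow : (0:ℝ) < u ^ r := pow_pos hupos r
        have hJ := pow_sum_div_card_le_sum_pow (s := U) (f := a)
          (fun i _ => Nat.cast_nonneg _) r
        have hJ' : (∑ x ∈ U, a x) ^ (r + 1) ≤ (∑ x ∈ U, a x ^ (r + 1)) * u ^ r := by
          rw [div_le_iff₀ hupow] at hJ
          exact hJ
        have hE : (∑ x ∈ U, a x) ≥ d * u ^ 2 - 2 * B := by
          rw [hsum_a]; exact hdense U hU
        have hEnn : (0:ℝ) ≤ d * u ^ 2 - 2 * B := by linarith
        have h4 : (d * u ^ 2 - 2 * B) ^ (r + 1) ≤ (∑ x ∈ U, a x) ^ (r + 1) :=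
          pow_le_pow_left₀ hEnn (by linarith) (r + 1)
        have h5 := pow_sub_ge (d * u ^ 2) (2 * B) (by linarith) hcase r
        have h6 : (d ^ (r+1) * u ^ (r+1+1) - 2 * ((r:ℝ)+1) * (d ^ r * B * u ^ r)) * u ^ r ≤
            (∑ x ∈ U, a x ^ (r + 1)) * u ^ r := by
          calc (d ^ (r+1) * u ^ (r+1+1) - 2*((r:ℝ)+1)*(d^r*B*u^r)) * u ^ r
              = (d * u ^ 2) ^ (r+1) - ((r:ℝ)+1) * (d * u ^ 2) ^ r * (2*B) := by
                push_cast; ring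
            _ ≤ (d * u ^ 2 - 2 * B) ^ (r+1) := by
                have := h5; push_cast at this ⊢; linarith
            _ ≤ (∑ x ∈ U, a x) ^ (r+1) := h4
            _ ≤ (∑ x ∈ U, a x ^ (r + 1)) * u ^ r := hJ'
        have h7 : d ^ (r+1) * u ^ (r+1+1) - 2*((r:ℝ)+1)*(d^r*B*u^r) ≤
            ∑ x ∈ U, a x ^ (r + 1) := le_of_mul_le_mul_right h6 hupow
        have h8 : d ^ C * u ^ (r+1+1) - 2*((r:ℝ)+1)*(d^c*(d^r*B*u^r)) ≤
            d ^ c * ∑ x ∈ U, a x ^ (r + 1) := by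
          have hmul := mul_le_mul_of_nonneg_left h7 (pow_nonneg hd0 c)
          have hpowC : d ^ C = d ^ c * d ^ (r+1) := by rw [hC, pow_add]
          calc d ^ C * u ^ (r+1+1) - 2*((r:ℝ)+1)*(d^c*(d^r*B*u^r))
              = d ^ c * (d ^ (r+1) * u ^ (r+1+1) - 2*((r:ℝ)+1)*(d^r*B*u^r)) := by
                rw [hpowC]; ring
            _ ≤ d ^ c * ∑ x ∈ U, a x ^ (r + 1) := hmul
        have h9 : 2*((r:ℝ)+1)*(d^c*(d^r*B*u^r)) ≤ 2*((r:ℝ)+1)*(B*M^r) := by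
          have hdc1 : d ^ c * d ^ r ≤ 1 := by
            rw [← pow_add]; exact pow_le_one₀ hd0 hd1
          have hur : u ^ r ≤ M ^ r := pow_le_pow_left₀ hu0 hUM r
          have h1 : d^c*(d^r*B*u^r) ≤ B * u ^ r := by
            nlinarith [mul_nonneg (sub_nonneg.2 hdc1) (mul_nonneg hB (pow_nonneg hu0 r))]
          have h2 : B * u ^ r ≤ B * M ^ r := mul_le_mul_of_nonneg_left hur hB
          exact mul_le_mul_of_nonneg_left (h1.trans h2) (by positivity)
        have h10 : u * T ≤ ((r:ℝ)+1)*(r:ℝ)*(B*M^r) := by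
          have hcoef : (0:ℝ) ≤ T := by
            rw [hT]; positivity
          calc u * T ≤ M * T := mul_le_mul_of_nonneg_right hUM hcoef
            _ = ((r:ℝ)+1)*(r:ℝ)*(B*M^r) := by
                rw [hT, mul_comm, div_mul_eq_mul_div, mul_div_assoc, div_self hM0.ne',
                  mul_one]
                ring
        have hgoal : ((((r+1:ℕ)):ℝ) + 1) * (((r+1:ℕ)):ℝ) * B * M ^ (r+1) / M =
            2*((r:ℝ)+1)*(B*M^r) + ((r:ℝ)+1)*(r:ℝ)*(B*M^r) := by
          rw [mul_div_assoc, hMdiv]; push_cast; ring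
        rw [ge_iff_le, hgoal]
        linarith [hstep, h8, h9, h10]
    · push_neg at hcase
      have hdC : d ^ C ≤ d := by
        calc d ^ C ≤ d ^ 1 := by
              apply pow_le_pow_of_le_one hd0 hd1
              rw [hCdef]
              exact Nat.choose_pos (by omega)
          _ = d := pow_one d
      have hur : u ^ r ≤ M ^ r := pow_le_pow_left₀ hu0 hUM r
      have hkey : d ^ C * u ^ (r + 1 + 1) ≤ 2 * (B * M ^ r) := by
        calc d ^ C * u ^ (r + 1 + 1) ≤ d * u ^ (r + 1 + 1) :=
              mul_le_mul_of_nonneg_right hdC (pow_nonneg hu0 _)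
          _ = (d * u ^ 2) * u ^ r := by ring
          _ ≤ (2 * B) * u ^ r := mul_le_mul_of_nonneg_right hcase.le (pow_nonneg hu0 r)
          _ ≤ (2 * B) * M ^ r := mul_le_mul_of_nonneg_left hur (by linarith)
          _ = 2 * (B * M ^ r) := by ring
      have hterm : 2 * (B * M ^ r) ≤
          ((((r+1:ℕ)):ℝ) + 1) * (((r+1:ℕ)):ℝ) * B * M ^ (r+1) / M := by
        push_cast
        rw [mul_div_assoc, hMdiv]
        nlinarith [mul_nonneg hB (pow_nonneg hM0.le r),
          mul_nonneg (Nat.cast_nonneg (α := ℝ) r) (mul_nonneg hB (pow_nonneg hM0.le r)),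
          mul_nonneg (Nat.cast_nonneg (α := ℝ) r)
            (mul_nonneg (Nat.cast_nonneg (α := ℝ) r) (mul_nonneg hB (pow_nonneg hM0.le r)))]
      linarith [Nat.cast_nonneg (α := ℝ) (cliqueTuples G U (r + 1 + 1)).card, hkey, hterm]


set_option maxHeartbeats 1000000 in
/-- the neighbourhood of a vertex of degree ≥ μn/2 in a (ρ,d)-dense graph
induces a (4ρ/μ²,d)-dense graph and hence contains many ordered K_{2k+1}. -/
theorem stmt8 (n k : ℕ) (hk : 1 ≤ k) (ρ d μ : ℝ) (hρ : 0 < ρ) (hd0 : 0 ≤ d) (hd1 : d ≤ 1)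
    (hμ : 0 < μ) (G : SimpleGraph (Fin n)) (hG : RhoDense G ρ d) (v : Fin n)
    (hv : ((Finset.univ.filter fun w => G.Adj v w).card : ℝ) ≥ μ * (n : ℝ) / 2) :
    (∀ U ⊆ Finset.univ.filter fun w => G.Adj v w,
      (edgePairs G U : ℝ) / 2 ≥ d * (U.card : ℝ) ^ 2 / 2 -
        (4 * ρ / μ ^ 2) * ((Finset.univ.filter fun w => G.Adj v w).card : ℝ) ^ 2) ∧
    ((Finset.univ.filter fun x : Fin (2 * k + 1) → Fin n =>
        (∀ i, G.Adj v (x i)) ∧ ∀ i j, i ≠ j → G.Adj (x i) (x j)).card : ℝ) ≥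
      (d ^ ((2 * k + 1).choose 2) - (2 * (k : ℝ)) * (2 * (k : ℝ) + 1) * (4 * ρ / μ ^ 2)) *
        ((Finset.univ.filter fun w => G.Adj v w).card : ℝ) ^ (2 * k + 1) := by
  set S : Finset (Fin n) := Finset.univ.filter fun w => G.Adj v w with hSdef
  have part1 : ∀ U ⊆ S, (edgePairs G U : ℝ) / 2 ≥ d * (U.card : ℝ) ^ 2 / 2 -
      (4 * ρ / μ ^ 2) * ((S.card : ℝ)) ^ 2 := by
    intro U hU
    have h := hG U
    have hcard : ((Fintype.card (Fin n) : ℕ) : ℝ) = (n : ℝ) := by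
      rw [Fintype.card_fin]
    rw [hcard] at h
    have hs2 : (μ * (n : ℝ) / 2) ^ 2 ≤ ((S.card : ℝ)) ^ 2 :=
      pow_le_pow_left₀ (by positivity) hv 2
    have hn2 : ρ * (n : ℝ) ^ 2 ≤ (4 * ρ / μ ^ 2) * ((S.card : ℝ)) ^ 2 := by
      rw [div_mul_eq_mul_div, le_div_iff₀ (pow_pos hμ 2)]
      have := mul_le_mul_of_nonneg_left hs2 hρ.le
      nlinarith [this]
    linarith
  refine ⟨part1, ?_⟩
  by_cases hS0 : S.card = 0
  · rw [show ((S.card : ℕ) : ℝ) = 0 from by rw [hS0]; norm_num,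
      zero_pow (by omega : 2 * k + 1 ≠ 0), mul_zero]
    exact Nat.cast_nonneg _
  · have hSpos : 0 < S.card := Nat.pos_of_ne_zero hS0
    set B : ℝ := (4 * ρ / μ ^ 2) * ((S.card : ℝ)) ^ 2 with hBdef
    have hB : 0 ≤ B := by rw [hBdef]; positivity
    have hdense : ∀ U ⊆ S, (edgePairs G U : ℝ) ≥ d * (U.card : ℝ) ^ 2 - 2 * B := by
      intro U hU
      have := part1 U hU
      linarith
    have hmain := clique_count G d B hd0 hd1 hB S hSpos hdense (2 * k) S (subset_refl S)
    have hsets : (Finset.univ.filter fun x : Fin (2 * k + 1) → Fin n =>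
        (∀ i, G.Adj v (x i)) ∧ ∀ i j, i ≠ j → G.Adj (x i) (x j)) =
        cliqueTuples G S (2 * k + 1) := by
      ext x
      simp [cliqueTuples, hSdef]
    rw [hsets]
    have hs0 : (0:ℝ) < (S.card : ℝ) := by exact_mod_cast hSpos
    have harith : (d ^ ((2 * k + 1).choose 2) -
          (2 * (k : ℝ)) * (2 * (k : ℝ) + 1) * (4 * ρ / μ ^ 2)) *
        ((S.card : ℝ)) ^ (2 * k + 1) =
        d ^ ((2 * k + 1).choose 2) * ((S.card : ℝ)) ^ (2 * k + 1) -
          (((2 * k : ℕ) : ℝ) + 1) * ((2 * k : ℕ) : ℝ) * B *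
            ((S.card : ℝ)) ^ (2 * k) / ((S.card : ℝ)) := by
      rw [hBdef]
      push_cast
      field_simp
      ring
    rw [harith]
    exact hmain
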